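/- There exist probability distributions (p_k) and (r_k) on ℤ₊ = {0,1,2,…} and a constant α ∈ (0,1) such that: (i) the distribution functions are of the same type, i.e., for all k ∈ ℤ₊, ∑_{j < k} r_j = 1 - m(α·k), where m(s) = (1/4)^s is such that ∑_{j < k} p_j = 1 - m(k); but (ii) the PGFs are not of the same type with this α in either direction, i.e., there exists s ∈ (0,1) with ∑_k r_k·s^k ≠ ∑_k p_k·(1 - α + α·s)^k and there exists s ∈ (0,1) with ∑_k p_k·s^k ≠ ∑_k r_k·(1 - α + α·s)^k. (A witness is p_k = (3/4)(1/4)^k, r_k = (1/2)(1/2)^k, α = 1/2.) -/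
import Mathlib

lemma geom_tsum_aux (c q : ℝ) (h0 : 0 ≤ q) (h1 : q < 1) :
    ∑' k : ℕ, c * q ^ k = c / (1 - q) := by
  rw [tsum_mul_left, tsum_geometric_of_lt_one h0 h1, div_eq_mul_inv]

lemma geom_tsum_aux2 (c q s : ℝ) (h0 : 0 ≤ q * s) (h1 : q * s < 1) :
    ∑' k : ℕ, (c * q ^ k) * s ^ k = c / (1 - q * s) := by
  have : ∀ k : ℕ, (c * q ^ k) * s ^ k = c * (q * s) ^ k := by
    intro k; rw [mul_pow]; ring
  rw [tsum_congr this, geom_tsum_aux c _ h0 h1]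

lemma geom_fsum_aux (c q : ℝ) (hq : q ≠ 1) (k : ℕ) :
    ∑ j ∈ Finset.range k, c * q ^ j = c * ((q ^ k - 1) / (q - 1)) := by
  rw [← Finset.mul_sum, geom_sum_eq hq]

/-- Non-equivalence of the two notions of "same type" in the discrete case: there exist
probability distributions `p`, `r` on ℤ₊ and `α ∈ (0,1)` whose distribution functions are
of the same type via `m s = (1/4)^s` (i.e. `∑_{j<k} p j = 1 - m k` and
`∑_{j<k} r j = 1 - m (α k)`), but whose PGFs are not of the same type with this `α` in
either direction. -/
theorem df_same_type_not_pgf_same_type :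
    ∃ (p r : ℕ → ℝ) (α : ℝ), α ∈ Set.Ioo (0 : ℝ) 1 ∧
      (∀ k, 0 ≤ p k) ∧ (∑' k : ℕ, p k = 1) ∧
      (∀ k, 0 ≤ r k) ∧ (∑' k : ℕ, r k = 1) ∧
      (∀ k : ℕ, ∑ j ∈ Finset.range k, p j = 1 - (1 / 4 : ℝ) ^ (k : ℝ)) ∧
      (∀ k : ℕ, ∑ j ∈ Finset.range k, r j = 1 - (1 / 4 : ℝ) ^ (α * (k : ℝ))) ∧
      (∃ s ∈ Set.Ioo (0 : ℝ) 1,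
        ∑' k : ℕ, r k * s ^ k ≠ ∑' k : ℕ, p k * (1 - α + α * s) ^ k) ∧
      (∃ s ∈ Set.Ioo (0 : ℝ) 1,
        ∑' k : ℕ, p k * s ^ k ≠ ∑' k : ℕ, r k * (1 - α + α * s) ^ k) := by
  refine ⟨fun k => 3/4 * (1/4) ^ k, fun k => 1/2 * (1/2) ^ k, 1/2,
    by norm_num, ?_, ?_, ?_, ?_, ?_, ?_, ?_, ?_⟩
  · intro k; positivity
  · rw [geom_tsum_aux (3/4) (1/4) (by norm_num) (by norm_num)]; norm_num
  · intro k; positivity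
  · rw [geom_tsum_aux (1/2) (1/2) (by norm_num) (by norm_num)]; norm_num
  · intro k
    rw [geom_fsum_aux (3/4) (1/4) (by norm_num) k, Real.rpow_natCast]
    have h : ((1:ℝ)/4) ^ k - 1 ≤ 0 := by
      have : ((1:ℝ)/4) ^ k ≤ 1 := pow_le_one₀ (by norm_num) (by norm_num)
      linarith
    field_simp
    ring
  · intro k
    have key : ((1:ℝ)/4) ^ ((1:ℝ)/2 * (k : ℝ)) = (1/2) ^ k := by
      rw [show ((1:ℝ)/4) = ((1:ℝ)/2) ^ (2:ℝ) by
        rw [show (2:ℝ) = ((2:ℕ):ℝ) by norm_num, Real.rpow_natCast]; norm_num,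
        ← Real.rpow_mul (by norm_num)]
      rw [show (2:ℝ) * (1/2 * (k:ℝ)) = (k:ℝ) by ring, Real.rpow_natCast]
    rw [key, geom_fsum_aux (1/2) (1/2) (by norm_num) k]
    field_simp
    ring
  · refine ⟨1/2, by norm_num, ?_⟩
    rw [geom_tsum_aux2 (1/2) (1/2) (1/2) (by norm_num) (by norm_num),
      show (1:ℝ) - 1/2 + 1/2 * (1/2) = 3/4 by norm_num,
      geom_tsum_aux2 (3/4) (1/4) (3/4) (by norm_num) (by norm_num)]
    norm_num
  · refine ⟨1/2, by norm_num, ?_⟩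
    rw [geom_tsum_aux2 (3/4) (1/4) (1/2) (by norm_num) (by norm_num),
      show (1:ℝ) - 1/2 + 1/2 * (1/2) = 3/4 by norm_num,
      geom_tsum_aux2 (1/2) (1/2) (3/4) (by norm_num) (by norm_num)]
    norm_num
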